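/- arXiv:1802.09859 — 2 statements merged into one kernel-verified Lean document; each statement's English description precedes it below -/
import Mathlib

section
/- Let M = (E,r) be a polymatroid, a ∈ E, and let k̲ and k̄ be the minimum and maximum of the coordinate x_a over x ∈ P(M); for integers k̲ ≤ k ≤ k̄ let N_k = {x ∈ P(M) : x_a = k}. Assume k̲ < k̄. Then for all nonnegative integers t, u, the set (P(M) + uΔ + t∇) ∩ ℤ^E is the disjoint union of the following sets: (N_{k̄} + uΔ + t∇') ∩ ℤ^E; the sets (N_k + uΔ' + t∇') ∩ ℤ^E for each integer k with k̲ < k < k̄; and (N_{k̲} + uΔ' + t∇) ∩ ℤ^E. -/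
/-!
Write a lattice point `q` of `P(M) + uΔ + t∇` as `p + y - z` with `p ∈ P(M)`, `y ∈ uΔ`, `z ∈ tΔ`,
and clamp `q_a` to `k ∈ [k̲, k̄]`. If `q_a > k̄` the excess `q_a - k̄ ≤ y_a` is moved out of `y`
(symmetrically, if `q_a < k̲`, the defect is moved out of `z`), giving a point `x` of
`P(M) + vΔ + w∇` with `x_a = k`. Such an `x` satisfies all inequalities of the base polytope of
`r + δ'_v + ν'_w`, where `δ'_v(S) = v [S ⊄ {a}]` and `ν'_w(S) = -w [E - a ⊆ S]` are the submodular
functions with base polytopes `vΔ'` and `w∇'`. The Minkowski sum theorem for base polytopes of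
submodular functions (Hahn–Banach separation plus the greedy algorithm) then puts `x` in
`P(M) + vΔ' + w∇'`, and since `Δ'` and `∇'` vanish at `a`, the `P(M)`-summand lies in `N_k`.
Disjointness: the `a`-coordinate of a point of the `k`-th piece is `≤ k` unless `k = k̄`, and `≥ k`
unless `k = k̲`.
-/

open scoped Pointwise
open Finset

noncomputable section

/-- The standard simplex `Δ = conv{e_i : i ∈ E}` in `ℝ^E`. -/
def stdSimplexSet (α : Type*) [Fintype α] [DecidableEq α] : Set (α → ℝ) :=
  convexHull ℝ {x : α → ℝ | ∃ i : α, x = Pi.single i (1 : ℝ)}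

/-- The number of lattice points (points of `ℤ^E`) in a subset of `ℝ^E`. -/
def latticeCount {α : Type*} (P : Set (α → ℝ)) : ℕ :=
  Set.ncard {q : α → ℤ | (fun i => (q i : ℝ)) ∈ P}

/-- `Qcount P t u` is the number of lattice points of `P + uΔ + t∇`. -/
def Qcount {α : Type*} [Fintype α] [DecidableEq α] (P : Set (α → ℝ)) (t u : ℕ) : ℕ :=
  latticeCount (P + (u : ℝ) • stdSimplexSet α + (t : ℝ) • (-stdSimplexSet α))

/-- A polymatroid on a finite ground set, given by its rank function. -/
structure PolyMatroid (α : Type*) [Fintype α] [DecidableEq α] where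
  rk : Finset α → ℕ
  rk_empty : rk ∅ = 0
  rk_mono : ∀ ⦃S T : Finset α⦄, S ⊆ T → rk S ≤ rk T
  rk_submod : ∀ S T : Finset α, rk (S ∪ T) + rk (S ∩ T) ≤ rk S + rk T

variable {α : Type*} [Fintype α] [DecidableEq α]

/-- A basis of a matroid (an independent spanning set). -/
def PolyMatroid.IsBasis (M : PolyMatroid α) (B : Finset α) : Prop :=
  M.rk B = B.card ∧ M.rk B = M.rk Finset.univ

/-- The indicator vector of a finite set. -/
def indicatorVec {α : Type*} [DecidableEq α] (B : Finset α) : α → ℝ :=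
  fun i => if i ∈ B then 1 else 0

/-- The base polytope of a matroid: the convex hull of indicator vectors of bases. -/
def matroidPolytope (M : PolyMatroid α) : Set (α → ℝ) :=
  convexHull ℝ {x : α → ℝ | ∃ B : Finset α, M.IsBasis B ∧ x = indicatorVec B}

/-- The base polytope of a polymatroid, by its inequality description. -/
def PolyMatroid.polytope (M : PolyMatroid α) : Set (α → ℝ) :=
  {x | (∑ i, x i) = (M.rk Finset.univ : ℝ) ∧
    ∀ S : Finset α, (∑ i ∈ S, x i) ≤ (M.rk S : ℝ)}

/-- `c : ℕ × ℕ → ℤ` is a `Q'`-datum for the counting function `Q` if it is finitely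
supported and interpolates `Q` in the binomial basis. -/
def IsQdatumFun (Q : ℕ → ℕ → ℕ) (c : ℕ × ℕ → ℤ) : Prop :=
  (Function.support c).Finite ∧
    ∀ t u : ℕ, (Q t u : ℤ) = ∑ᶠ p : ℕ × ℕ, c p * (t.choose p.1 : ℤ) * (u.choose p.2 : ℤ)

/-- A `Q'`-datum for the lattice-point counting function of the polytope `P`. -/
def IsQdatum (P : Set (α → ℝ)) (c : ℕ × ℕ → ℤ) : Prop :=
  IsQdatumFun (Qcount P) c

/-- The polynomial `Q'` associated to a `Q'`-datum, as a function on `ℚ × ℚ`. -/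
def Qprime (c : ℕ × ℕ → ℤ) (x y : ℚ) : ℚ :=
  ∑ᶠ p : ℕ × ℕ, (c p : ℚ) * (x - 1) ^ p.1 * (y - 1) ^ p.2

/-- The polynomial `Q'` associated to a `Q'`-datum, as a polynomial in two variables. -/
def QprimePoly (c : ℕ × ℕ → ℤ) : MvPolynomial (Fin 2) ℤ :=
  ∑ᶠ p : ℕ × ℕ,
    MvPolynomial.C (c p) * (MvPolynomial.X 0 - 1) ^ p.1 * (MvPolynomial.X 1 - 1) ^ p.2

/-- The Tutte polynomial of a matroid, as a function on `ℚ × ℚ`. -/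
def TuttePoly (M : PolyMatroid α) (x y : ℚ) : ℚ :=
  ∑ S : Finset α,
    (x - 1) ^ (M.rk Finset.univ - M.rk S) * (y - 1) ^ (S.card - M.rk S)


variable {α : Type*} [Fintype α] [DecidableEq α]

/-- The simplex `Δ' = conv{e_i : i ∈ E, i ≠ a}` in `ℝ^E`. -/
def stdSimplexAway (α : Type*) [Fintype α] [DecidableEq α] (a : α) : Set (α → ℝ) :=
  convexHull ℝ {x : α → ℝ | ∃ i : α, i ≠ a ∧ x = Pi.single i (1 : ℝ)}

/-- The `a`-slice `N_k = {x ∈ P(M) : x_a = k}` of the base polytope. -/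
def PolyMatroid.slice (M : PolyMatroid α) (a : α) (k : ℤ) : Set (α → ℝ) :=
  {x ∈ M.polytope | x a = (k : ℝ)}

section Submodular

variable {α : Type*} [DecidableEq α]

def IsSubmodular (g : Finset α → ℝ) : Prop :=
  ∀ S T, g (S ∪ T) + g (S ∩ T) ≤ g S + g T

theorem IsSubmodular.add {g h : Finset α → ℝ} (hg : IsSubmodular g) (hh : IsSubmodular h) :
    IsSubmodular (g + h) := fun S T => by
  simp only [Pi.add_apply]
  linarith [hg S T, hh S T]

end Submodular

section BasePolytope

variable {α : Type*} [Fintype α]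

def basePolytope (g : Finset α → ℝ) : Set (α → ℝ) :=
  {x | ∑ i, x i = g univ ∧ ∀ S, ∑ i ∈ S, x i ≤ g S}

theorem convex_basePolytope (g : Finset α → ℝ) : Convex ℝ (basePolytope g) := by
  rintro x ⟨hx, hxS⟩ y ⟨hy, hyS⟩ a b ha hb hab
  simp only [basePolytope, Set.mem_ofPred_eq, Pi.add_apply, Pi.smul_apply, smul_eq_mul,
    sum_add_distrib, ← mul_sum]
  refine ⟨by rw [hx, hy, ← add_mul, hab, one_mul], fun S => ?_⟩
  calc a * ∑ i ∈ S, x i + b * ∑ i ∈ S, y i ≤ a * g S + b * g S := by gcongr <;> simp [*]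
    _ = g S := by rw [← add_mul, hab, one_mul]

theorem isClosed_basePolytope (g : Finset α → ℝ) : IsClosed (basePolytope g) := by
  simp only [basePolytope, Set.ofPred_and, Set.ofPred_forall]
  exact (isClosed_eq (by fun_prop) continuous_const).inter
    (isClosed_iInter fun S => isClosed_le (by fun_prop) continuous_const)

theorem isCompact_basePolytope [DecidableEq α] (g : Finset α → ℝ) :
    IsCompact (basePolytope g) := by
  refine (isCompact_univ_pi fun i => isCompact_Icc (a := g univ - g (univ.erase i))
    (b := g {i})).of_isClosed_subset (isClosed_basePolytope g) fun x hx i _ => ⟨?_, ?_⟩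
  · have := hx.2 (univ.erase i)
    rw [← hx.1, ← add_sum_erase _ _ (mem_univ i)]
    linarith
  · simpa using hx.2 {i}

end BasePolytope

section Greedy

variable {α : Type*} [Fintype α] {n : ℕ} (e : Fin n ≃ α) (g : Finset α → ℝ)

theorem exists_equiv_antitone (w : α → ℝ) : ∃ e : Fin (Fintype.card α) ≃ α, Antitone (w ∘ e) := by
  set e₀ := (Fintype.equivFin α).symm
  set f : Fin (Fintype.card α) → ℝᵒᵈ := fun j => OrderDual.toDual (w (e₀ j))
  exact ⟨(Tuple.sort f).trans e₀, (Tuple.monotone_sort f).dual_right⟩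

def prefixSet (m : ℕ) : Finset α :=
  univ.filter fun i => (e.symm i : ℕ) < m

theorem mem_prefixSet {m : ℕ} {i : α} : i ∈ prefixSet e m ↔ (e.symm i : ℕ) < m := by
  simp [prefixSet]

theorem prefixSet_zero : prefixSet e 0 = ∅ := by
  ext i
  simp [mem_prefixSet]

theorem prefixSet_of_le {m : ℕ} (hm : n ≤ m) : prefixSet e m = univ := by
  ext i
  simpa [mem_prefixSet] using (e.symm i).isLt.trans_le hm

theorem apply_notMem_prefixSet (j : Fin n) : e j ∉ prefixSet e j := by
  simp [mem_prefixSet]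

def greedyPoint (i : α) : ℝ :=
  g (prefixSet e (e.symm i + 1)) - g (prefixSet e (e.symm i))

theorem greedyPoint_add (h : Finset α → ℝ) :
    greedyPoint e (g + h) = greedyPoint e g + greedyPoint e h := by
  ext i
  simp only [greedyPoint, Pi.add_apply]
  ring

variable [DecidableEq α]

theorem prefixSet_succ (j : Fin n) : prefixSet e (j + 1) = insert (e j) (prefixSet e j) := by
  ext i
  rw [mem_insert, mem_prefixSet, mem_prefixSet, ← e.symm_apply_eq, Fin.ext_iff]
  omega

theorem greedyPoint_apply (j : Fin n) :
    greedyPoint e g (e j) = g (insert (e j) (prefixSet e j)) - g (prefixSet e j) := by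
  simp [greedyPoint, prefixSet_succ]

theorem sum_prefixSet_greedyPoint {m : ℕ} (hm : m ≤ n) :
    ∑ i ∈ prefixSet e m, greedyPoint e g i = g (prefixSet e m) - g ∅ := by
  induction m with
  | zero => simp [prefixSet_zero]
  | succ m ih =>
    rw [prefixSet_succ e ⟨m, hm⟩, sum_insert (apply_notMem_prefixSet e _), ih (by omega),
      greedyPoint_apply]
    ring

theorem sum_greedyPoint : ∑ i, greedyPoint e g i = g univ - g ∅ := by
  simpa [prefixSet_of_le] using sum_prefixSet_greedyPoint e g le_rfl

theorem sum_inter_prefixSet_greedyPoint_le (hg : IsSubmodular g) (S : Finset α) {m : ℕ}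
    (hm : m ≤ n) : ∑ i ∈ S ∩ prefixSet e m, greedyPoint e g i ≤ g (S ∩ prefixSet e m) - g ∅ := by
  induction m with
  | zero => simp [prefixSet_zero]
  | succ m ih =>
    set j : Fin n := ⟨m, hm⟩
    have hj := apply_notMem_prefixSet e j
    rw [prefixSet_succ e j]
    by_cases hjS : e j ∈ S
    · rw [inter_insert_of_mem hjS, sum_insert fun h => hj (mem_inter.1 h).2, greedyPoint_apply]
      have hsub := hg (insert (e j) (S ∩ prefixSet e j)) (prefixSet e j)
      rw [insert_union, union_eq_right.2 inter_subset_right, insert_inter_of_notMem hj,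
        inter_assoc, inter_self] at hsub
      linarith [ih (by omega)]
    · rw [inter_insert_of_notMem hjS]
      exact ih (by omega)

theorem greedyPoint_mem_basePolytope (hg : IsSubmodular g) (hg₀ : g ∅ = 0) :
    greedyPoint e g ∈ basePolytope g :=
  ⟨by simpa [hg₀] using sum_greedyPoint e g,
    fun S => by
      simpa [prefixSet_of_le, hg₀] using sum_inter_prefixSet_greedyPoint_le e g hg S le_rfl⟩

theorem sum_mul_le_sum_mul_greedyPoint (hg₀ : g ∅ = 0) {w : α → ℝ} (hw : Antitone (w ∘ e))
    {x : α → ℝ} (hx : x ∈ basePolytope g) :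
    ∑ i, w i * x i ≤ ∑ i, w i * greedyPoint e g i := by
  set D : ℕ → ℝ := fun m => ∑ i ∈ prefixSet e m, (greedyPoint e g i - x i)
  set W : ℕ → ℝ := fun j => if h : j < n then w (e ⟨j, h⟩) else 0
  have hD : ∀ m ≤ n, 0 ≤ D m := fun m hm => by
    simpa [D, sum_sub_distrib, sum_prefixSet_greedyPoint e g hm, hg₀] using hx.2 _
  have hD₀ : D 0 = 0 := by simp [D, prefixSet_zero]
  have hDn : D n = 0 := by
    simp [D, sum_sub_distrib, prefixSet_of_le, sum_greedyPoint, hg₀, hx.1]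
  have hsum : ∑ i, w i * (greedyPoint e g i - x i) = ∑ j ∈ range n, W j * (D (j + 1) - D j) := by
    rw [← e.sum_comp, ← Fin.sum_univ_eq_sum_range]
    refine sum_congr rfl fun j _ => ?_
    simp only [W, D, prefixSet_succ, sum_insert (apply_notMem_prefixSet e j), dif_pos j.isLt]
    ring
  -- Abel summation: the partial sums `D m` are nonnegative and `D n = 0`, while `W` is antitone
  -- on `range n` (its values from `n` on never enter).
  have hparts := sum_range_by_parts W (fun j => D (j + 1) - D j) n
  simp only [sum_range_sub, smul_eq_mul] at hparts
  suffices 0 ≤ ∑ i, w i * (greedyPoint e g i - x i) by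
    simpa [mul_sub, sum_sub_distrib] using this
  simp only [hsum, hparts, hDn, hD₀, sub_zero, mul_zero, zero_sub, neg_nonneg]
  refine sum_nonpos fun i hi => ?_
  have hi : i + 1 < n := by rw [mem_range] at hi; omega
  refine mul_nonpos_of_nonpos_of_nonneg ?_ (hD _ hi.le)
  simp only [W, dif_pos hi, dif_pos (Nat.lt_of_succ_lt hi), sub_nonpos]
  exact hw (Fin.mk_le_mk.2 (Nat.le_succ i))

end Greedy

section MinkowskiSum

variable {α : Type*} [Fintype α] [DecidableEq α]

theorem basePolytope_add_subset {g₁ g₂ : Finset α → ℝ} (hg₁ : IsSubmodular g₁) (hg₁₀ : g₁ ∅ = 0)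
    (hg₂ : IsSubmodular g₂) (hg₂₀ : g₂ ∅ = 0) :
    basePolytope (g₁ + g₂) ⊆ basePolytope g₁ + basePolytope g₂ := by
  intro x hx
  by_contra hx'
  obtain ⟨f, c, hf, hfx⟩ := geometric_hahn_banach_closed_point
    ((convex_basePolytope g₁).add (convex_basePolytope g₂))
    ((isCompact_basePolytope g₁).add (isCompact_basePolytope g₂)).isClosed hx'
  set w : α → ℝ := fun i => f fun j => if i = j then 1 else 0
  have hfw : ∀ y, f y = ∑ i, w i * y i := fun y => by
    simpa [mul_comm] using f.toLinearMap.pi_apply_eq_sum_univ y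
  obtain ⟨e, he⟩ := exists_equiv_antitone w
  have hγ := hf _ (Set.add_mem_add (greedyPoint_mem_basePolytope e g₁ hg₁ hg₁₀)
    (greedyPoint_mem_basePolytope e g₂ hg₂ hg₂₀))
  have hopt := sum_mul_le_sum_mul_greedyPoint e (g₁ + g₂) (by simp [hg₁₀, hg₂₀]) he hx
  rw [greedyPoint_add, ← hfw, ← hfw] at hopt
  linarith

end MinkowskiSum

theorem mem_smul_neg_iff {E : Type*} [AddCommGroup E] [Module ℝ E] {t : ℝ} {S : Set E} {z : E} :
    z ∈ t • -S ↔ -z ∈ t • S := by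
  rw [Set.smul_set_neg, Set.mem_neg]

section Simplex

variable {α : Type*} [Fintype α] [DecidableEq α]

theorem convexHull_single_eq (p : α → Prop) :
    convexHull ℝ {y : α → ℝ | ∃ i, p i ∧ y = Pi.single i 1} =
      {x | (∀ i, 0 ≤ x i) ∧ ∑ i, x i = 1 ∧ ∀ i, ¬p i → x i = 0} := by
  refine Set.Subset.antisymm (convexHull_min ?_ ?_) ?_
  · rintro _ ⟨i, hi, rfl⟩
    refine ⟨fun j => ?_, by simp, fun j hj => Pi.single_eq_of_ne (by rintro rfl; exact hj hi) _⟩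
    rw [Pi.single_apply]
    split_ifs <;> norm_num
  · rintro x ⟨hx₀, hx₁, hxp⟩ y ⟨hy₀, hy₁, hyp⟩ a b ha hb hab
    refine ⟨fun i => add_nonneg (mul_nonneg ha (hx₀ i)) (mul_nonneg hb (hy₀ i)), ?_,
      fun i hi => by simp [hxp i hi, hyp i hi]⟩
    simp [sum_add_distrib, ← mul_sum, hx₁, hy₁, hab]
  · rintro x ⟨hx₀, hx₁, hxp⟩
    classical
    have hx : x = ∑ i ∈ univ.filter p, x i • Pi.single i (1 : ℝ) := by
      ext j
      by_cases hj : p j <;> simp [Pi.single_apply, hj, hxp]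
    have hw : ∑ i ∈ univ.filter p, x i = 1 := by
      rw [sum_filter_of_ne fun i _ h => by_contra fun hi => h (hxp i hi), hx₁]
    rw [hx]
    exact (convex_convexHull ℝ _).sum_mem (fun i _ => hx₀ i) hw
      fun i hi => subset_convexHull ℝ _ ⟨i, (mem_filter.1 hi).2, rfl⟩

theorem mem_smul_convexHull_single_iff {p : α → Prop} (hp : ∃ i, p i) {u : ℝ} (hu : 0 ≤ u)
    {x : α → ℝ} : x ∈ u • convexHull ℝ {y : α → ℝ | ∃ i, p i ∧ y = Pi.single i 1} ↔
      (∀ i, 0 ≤ x i) ∧ ∑ i, x i = u ∧ ∀ i, ¬p i → x i = 0 := by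
  obtain ⟨i₀, hi₀⟩ := hp
  rcases hu.eq_or_lt with rfl | hu
  · have hne : (convexHull ℝ {y : α → ℝ | ∃ i, p i ∧ y = Pi.single i 1}).Nonempty :=
      ⟨_, subset_convexHull ℝ _ ⟨i₀, hi₀, rfl⟩⟩
    rw [Set.zero_smul_set hne, Set.mem_zero]
    constructor
    · rintro rfl
      simp
    · rintro ⟨hx₀, hx₁, -⟩
      ext i
      exact (sum_eq_zero_iff_of_nonneg fun j _ => hx₀ j).1 hx₁ i (mem_univ i)
  · rw [Set.mem_smul_set_iff_inv_smul_mem₀ hu.ne', convexHull_single_eq]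
    simp only [Set.mem_ofPred_eq, Pi.smul_apply, smul_eq_mul, ← mul_sum, inv_mul_eq_one₀ hu.ne',
      mul_eq_zero, inv_eq_zero, hu.ne', false_or]
    simp only [mul_nonneg_iff_of_pos_left (inv_pos.2 hu), eq_comm (a := u)]

theorem mem_smul_stdSimplexSet_iff [Nonempty α] {u : ℝ} (hu : 0 ≤ u) {x : α → ℝ} :
    x ∈ u • stdSimplexSet α ↔ (∀ i, 0 ≤ x i) ∧ ∑ i, x i = u := by
  simpa [stdSimplexSet] using
    mem_smul_convexHull_single_iff (p := fun _ : α => True) ⟨Classical.arbitrary α, trivial⟩ hu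

theorem mem_smul_stdSimplexAway_iff [Nontrivial α] (a : α) {u : ℝ} (hu : 0 ≤ u) {x : α → ℝ} :
    x ∈ u • stdSimplexAway α a ↔ (∀ i, 0 ≤ x i) ∧ ∑ i, x i = u ∧ x a = 0 := by
  simpa [stdSimplexAway] using mem_smul_convexHull_single_iff (exists_ne a) hu

theorem stdSimplexAway_subset (a : α) : stdSimplexAway α a ⊆ stdSimplexSet α :=
  convexHull_mono fun _ ⟨i, _, hi⟩ => ⟨i, hi⟩

theorem ite_subset_stdSimplexSet (a : α) (c : Prop) [Decidable c] :
    (if c then stdSimplexSet α else stdSimplexAway α a) ⊆ stdSimplexSet α := by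
  split_ifs
  exacts [subset_rfl, stdSimplexAway_subset a]

theorem stdSimplexAway_subset_ite (a : α) (c : Prop) [Decidable c] :
    stdSimplexAway α a ⊆ if c then stdSimplexSet α else stdSimplexAway α a := by
  split_ifs
  exacts [stdSimplexAway_subset a, subset_rfl]

theorem apply_mem_Icc_of_mem_smul_stdSimplexSet [Nonempty α] {u : ℝ} (hu : 0 ≤ u) {y : α → ℝ}
    (hy : y ∈ u • stdSimplexSet α) (a : α) : y a ∈ Set.Icc 0 u := by
  obtain ⟨hy₀, hy₁⟩ := (mem_smul_stdSimplexSet_iff hu).1 hy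
  exact ⟨hy₀ a, hy₁ ▸ single_le_sum (fun i _ => hy₀ i) (mem_univ a)⟩

theorem sub_single_mem_smul_stdSimplexSet [Nonempty α] {a : α} {u s : ℝ} {y : α → ℝ}
    (hu : 0 ≤ u) (hy : y ∈ u • stdSimplexSet α) (hsy : s ≤ y a) (hsu : s ≤ u) :
    y - Pi.single a s ∈ (u - s) • stdSimplexSet α := by
  obtain ⟨hy₀, hy₁⟩ := (mem_smul_stdSimplexSet_iff hu).1 hy
  rw [mem_smul_stdSimplexSet_iff (sub_nonneg.2 hsu)]
  refine ⟨fun i => ?_, by simp [sum_sub_distrib, hy₁]⟩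
  rcases eq_or_ne i a with rfl | hi
  · simpa using hsy
  · simpa [hi] using hy₀ i

theorem add_single_mem_smul_stdSimplexSet [Nonempty α] {a : α} {v s : ℝ} {y : α → ℝ}
    (hv : 0 ≤ v) (hs : 0 ≤ s) (hy : y ∈ v • stdSimplexSet α) :
    y + Pi.single a s ∈ (v + s) • stdSimplexSet α := by
  obtain ⟨hy₀, hy₁⟩ := (mem_smul_stdSimplexSet_iff hv).1 hy
  rw [mem_smul_stdSimplexSet_iff (add_nonneg hv hs)]
  have hs' : (0 : α → ℝ) ≤ Pi.single a s := Pi.single_nonneg.2 hs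
  exact ⟨fun i => add_nonneg (hy₀ i) (hs' i), by simp [sum_add_distrib, hy₁]⟩

end Simplex

section SimplexFunctions

variable {α : Type*} [DecidableEq α]

def simplexAwayFn (a : α) (v : ℝ) (S : Finset α) : ℝ :=
  if S ⊆ {a} then 0 else v

theorem isSubmodular_simplexAwayFn (a : α) {v : ℝ} (hv : 0 ≤ v) :
    IsSubmodular (simplexAwayFn a v) := by
  intro S T
  simp only [simplexAwayFn, union_subset_iff]
  split_ifs <;> grind [inter_subset_left]

variable [Fintype α]

def negSimplexAwayFn (a : α) (w : ℝ) (S : Finset α) : ℝ :=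
  if univ.erase a ⊆ S then -w else 0

theorem isSubmodular_negSimplexAwayFn (a : α) {w : ℝ} (hw : 0 ≤ w) :
    IsSubmodular (negSimplexAwayFn a w) := by
  intro S T
  simp only [negSimplexAwayFn, subset_inter_iff]
  split_ifs <;> grind [subset_union_left, subset_union_right]

theorem negSimplexAwayFn_univ (a : α) (w : ℝ) : negSimplexAwayFn a w univ = -w :=
  if_pos (erase_subset a univ)

variable [Nontrivial α]

theorem erase_univ_not_subset_singleton (a : α) : ¬univ.erase a ⊆ {a} := fun h => by
  obtain ⟨b, hb⟩ := exists_ne a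
  exact hb (mem_singleton.1 (h (mem_erase.2 ⟨hb, mem_univ b⟩)))

theorem simplexAwayFn_univ (a : α) (v : ℝ) : simplexAwayFn a v univ = v :=
  if_neg fun h => erase_univ_not_subset_singleton a ((erase_subset a univ).trans h)

theorem negSimplexAwayFn_empty (a : α) (w : ℝ) : negSimplexAwayFn a w ∅ = 0 :=
  if_neg fun h => erase_univ_not_subset_singleton a (h.trans (empty_subset _))

theorem basePolytope_simplexAwayFn_subset (a : α) {v : ℝ} (hv : 0 ≤ v) :
    basePolytope (simplexAwayFn a v) ⊆ v • stdSimplexAway α a := by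
  rintro x ⟨hsum, hle⟩
  have hnonneg : ∀ i, 0 ≤ x i := fun i => by
    have h := hle (univ.erase i)
    have : simplexAwayFn a v (univ.erase i) ≤ v := by unfold simplexAwayFn; split_ifs <;> linarith
    rw [← add_sum_erase _ _ (mem_univ i), simplexAwayFn_univ] at hsum
    linarith
  have hxa : x a ≤ 0 := by simpa [simplexAwayFn] using hle {a}
  rw [mem_smul_stdSimplexAway_iff a hv]
  exact ⟨hnonneg, hsum.trans (simplexAwayFn_univ a v), le_antisymm hxa (hnonneg a)⟩

theorem basePolytope_negSimplexAwayFn_subset (a : α) {w : ℝ} (hw : 0 ≤ w) :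
    basePolytope (negSimplexAwayFn a w) ⊆ w • -stdSimplexAway α a := by
  rintro x ⟨hsum, hle⟩
  have hnonpos : ∀ i, x i ≤ 0 := fun i => by
    have : negSimplexAwayFn a w {i} ≤ 0 := by unfold negSimplexAwayFn; split_ifs <;> linarith
    simpa using (hle {i}).trans this
  have hxa : 0 ≤ x a := by
    have h := hle (univ.erase a)
    rw [negSimplexAwayFn, if_pos subset_rfl] at h
    rw [← add_sum_erase _ _ (mem_univ a), negSimplexAwayFn_univ] at hsum
    linarith
  rw [Set.smul_set_neg, Set.mem_neg, mem_smul_stdSimplexAway_iff a hw]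
  refine ⟨fun i => neg_nonneg.2 (hnonpos i), ?_, by simp [le_antisymm (hnonpos a) hxa]⟩
  simp [sum_neg_distrib, hsum, negSimplexAwayFn_univ]

end SimplexFunctions

section Polymatroid

variable {α : Type*} [Fintype α] [DecidableEq α] (M : PolyMatroid α)

theorem PolyMatroid.isSubmodular_rk : IsSubmodular fun S => (M.rk S : ℝ) := fun S T => by
  dsimp only
  exact_mod_cast M.rk_submod S T

variable {M}

theorem PolyMatroid.apply_le_rk_singleton {x : α → ℝ} (hx : x ∈ M.polytope) (a : α) :
    x a ≤ M.rk {a} := by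
  simpa using hx.2 {a}

theorem PolyMatroid.rk_sub_rk_erase_le_apply {x : α → ℝ} (hx : x ∈ M.polytope) (a : α) :
    (M.rk univ : ℝ) - M.rk (univ.erase a) ≤ x a := by
  have := hx.2 (univ.erase a)
  rw [← hx.1, ← add_sum_erase _ _ (mem_univ a)]
  linarith

variable [Nontrivial α]

theorem PolyMatroid.basePolytope_rk_add_subset (a : α) {v w : ℝ} (hv : 0 ≤ v) (hw : 0 ≤ w) :
    basePolytope ((fun S => (M.rk S : ℝ)) + simplexAwayFn a v + negSimplexAwayFn a w) ⊆
      M.polytope + v • stdSimplexAway α a + w • -stdSimplexAway α a := by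
  have hrk₀ : (M.rk ∅ : ℝ) = 0 := by simp [M.rk_empty]
  have hδ₀ : simplexAwayFn a v ∅ = 0 := if_pos (empty_subset _)
  refine (basePolytope_add_subset (M.isSubmodular_rk.add (isSubmodular_simplexAwayFn a hv))
    (by simp [hrk₀, hδ₀]) (isSubmodular_negSimplexAwayFn a hw) (negSimplexAwayFn_empty a w)).trans
    (Set.add_subset_add ?_ (basePolytope_negSimplexAwayFn_subset a hw))
  exact (basePolytope_add_subset M.isSubmodular_rk hrk₀ (isSubmodular_simplexAwayFn a hv) hδ₀).trans
    (Set.add_subset_add_left (basePolytope_simplexAwayFn_subset a hv))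

theorem PolyMatroid.mem_basePolytope_rk_add (a : α) {v w : ℝ} {x : α → ℝ}
    (hsum : ∑ i, x i = M.rk univ + v - w) (hle : ∀ S, ∑ i ∈ S, x i ≤ M.rk S + v)
    (hlo : (M.rk univ : ℝ) - M.rk (univ.erase a) ≤ x a) (hhi : x a ≤ M.rk {a}) :
    x ∈ basePolytope ((fun S => (M.rk S : ℝ)) + simplexAwayFn a v + negSimplexAwayFn a w) := by
  refine ⟨?_, fun S => ?_⟩
  · simp only [Pi.add_apply, simplexAwayFn_univ, negSimplexAwayFn_univ, hsum]
    ring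
  simp only [Pi.add_apply, simplexAwayFn, negSimplexAwayFn]
  split_ifs with h₁ h₂ h₂
  · exact absurd (h₂.trans h₁) (erase_univ_not_subset_singleton a)
  · rcases subset_singleton_iff.1 h₁ with rfl | rfl
    · simp [M.rk_empty]
    · simpa using hhi
  · by_cases ha : a ∈ S
    · obtain rfl : S = univ := eq_univ_iff_forall.2 fun i => by
        rcases eq_or_ne i a with rfl | hi
        exacts [ha, h₂ (mem_erase.2 ⟨hi, mem_univ i⟩)]
      linarith
    · obtain rfl : S = univ.erase a :=
        Subset.antisymm (fun i hi => mem_erase.2 ⟨ne_of_mem_of_not_mem hi ha, mem_univ i⟩) h₂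
      rw [← add_sum_erase _ _ (mem_univ a)] at hsum
      linarith
  · linarith [hle S]

theorem PolyMatroid.mem_slice_add_away_of_mem_polytope_add_away {a : α} {v w : ℝ} (hv : 0 ≤ v)
    (hw : 0 ≤ w) {k : ℤ} {x : α → ℝ}
    (hx : x ∈ M.polytope + v • stdSimplexAway α a + w • -stdSimplexAway α a) (hk : x a = k) :
    x ∈ M.slice a k + v • stdSimplexAway α a + w • -stdSimplexAway α a := by
  obtain ⟨_, ⟨p, hp, y, hy, rfl⟩, z, hz, rfl⟩ := hx
  have hya := ((mem_smul_stdSimplexAway_iff a hv).1 hy).2.2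
  have hza := ((mem_smul_stdSimplexAway_iff a hw).1 (mem_smul_neg_iff.1 hz)).2.2
  exact Set.add_mem_add (Set.add_mem_add ⟨hp, by simpa [hya, neg_eq_zero.1 hza] using hk⟩ hy) hz

theorem PolyMatroid.mem_slice_add_away_of_mem_polytope_add (a : α) {v w : ℝ} (hv : 0 ≤ v)
    (hw : 0 ≤ w) {k : ℤ} (hlo : (M.rk univ : ℝ) - M.rk (univ.erase a) ≤ k)
    (hhi : (k : ℝ) ≤ M.rk {a}) {x : α → ℝ}
    (hx : x ∈ M.polytope + v • stdSimplexSet α + w • -stdSimplexSet α) (hk : x a = k) :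
    x ∈ M.slice a k + v • stdSimplexAway α a + w • -stdSimplexAway α a := by
  refine M.mem_slice_add_away_of_mem_polytope_add_away hv hw (M.basePolytope_rk_add_subset a hv hw ?_) hk
  obtain ⟨_, ⟨p, hp, y, hy, rfl⟩, z, hz, rfl⟩ := hx
  obtain ⟨hy₀, hy₁⟩ := (mem_smul_stdSimplexSet_iff hv).1 hy
  obtain ⟨hz₀, hz₁⟩ := (mem_smul_stdSimplexSet_iff hw).1 (mem_smul_neg_iff.1 hz)
  simp only [Pi.neg_apply, sum_neg_distrib, neg_nonneg] at hz₀ hz₁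
  refine M.mem_basePolytope_rk_add a ?_ (fun S => ?_) (hk ▸ hlo) (hk ▸ hhi)
  · simp only [Pi.add_apply, sum_add_distrib, hp.1, hy₁]
    linarith
  · have hyS : ∑ i ∈ S, y i ≤ v :=
      hy₁ ▸ sum_le_sum_of_subset_of_nonneg (subset_univ S) fun i _ _ => hy₀ i
    have hzS : ∑ i ∈ S, z i ≤ 0 := sum_nonpos fun i _ => hz₀ i
    simp only [Pi.add_apply, sum_add_distrib]
    linarith [hp.2 S]

end Polymatroid

section Slices

variable {α : Type*} [Fintype α] [DecidableEq α] [Nontrivial α] {M : PolyMatroid α} {a : α}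
  {u t : ℝ} {k : ℤ}

theorem PolyMatroid.mem_slice_add_of_le_apply (hu : 0 ≤ u) (ht : 0 ≤ t)
    (hlo : (M.rk univ : ℝ) - M.rk (univ.erase a) ≤ k) (hhi : (k : ℝ) ≤ M.rk {a})
    (hP : ∀ p ∈ M.polytope, p a ≤ k) {x : α → ℝ}
    (hx : x ∈ M.polytope + u • stdSimplexSet α + t • -stdSimplexSet α) (hk : k ≤ x a) :
    x ∈ M.slice a k + u • stdSimplexSet α + t • -stdSimplexAway α a := by
  obtain ⟨_, ⟨p, hp, y, hy, rfl⟩, z, hz, rfl⟩ := hx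
  beta_reduce at hk ⊢
  set s := (p + y + z) a - k
  have hsy : s ≤ y a := by
    have := (apply_mem_Icc_of_mem_smul_stdSimplexSet ht (mem_smul_neg_iff.1 hz) a).1
    simp only [s, Pi.add_apply, Pi.neg_apply] at this ⊢
    linarith [hP p hp]
  have hsu : s ≤ u := hsy.trans (apply_mem_Icc_of_mem_smul_stdSimplexSet hu hy a).2
  obtain ⟨_, ⟨n, hn, y', hy', rfl⟩, z', hz', he⟩ :=
    M.mem_slice_add_away_of_mem_polytope_add a (sub_nonneg.2 hsu) ht hlo hhi
      (Set.add_mem_add (Set.add_mem_add hp (sub_single_mem_smul_stdSimplexSet hu hy hsy hsu)) hz)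
      (by simp only [s, Pi.add_apply, Pi.sub_apply, Pi.single_eq_same]; ring)
  beta_reduce at he
  have hy'' := add_single_mem_smul_stdSimplexSet (a := a) (sub_nonneg.2 hsu) (sub_nonneg.2 hk)
    (Set.smul_set_mono (stdSimplexAway_subset a) hy')
  refine ⟨_, Set.add_mem_add hn (by simpa [s] using hy''), z', hz', ?_⟩
  calc n + (y' + Pi.single a s) + z' = n + y' + z' + Pi.single a s := by abel
    _ = p + y + z := by rw [he]; abel

theorem PolyMatroid.mem_slice_add_of_apply_le (hu : 0 ≤ u) (ht : 0 ≤ t)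
    (hlo : (M.rk univ : ℝ) - M.rk (univ.erase a) ≤ k) (hhi : (k : ℝ) ≤ M.rk {a})
    (hP : ∀ p ∈ M.polytope, (k : ℝ) ≤ p a) {x : α → ℝ}
    (hx : x ∈ M.polytope + u • stdSimplexSet α + t • -stdSimplexSet α) (hk : x a ≤ k) :
    x ∈ M.slice a k + u • stdSimplexAway α a + t • -stdSimplexSet α := by
  obtain ⟨_, ⟨p, hp, y, hy, rfl⟩, z, hz, rfl⟩ := hx
  beta_reduce at hk ⊢
  rw [mem_smul_neg_iff] at hz
  set s := k - (p + y + z) a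
  have hsz : s ≤ (-z) a := by
    have := (apply_mem_Icc_of_mem_smul_stdSimplexSet hu hy a).1
    simp only [s, Pi.add_apply, Pi.neg_apply] at this ⊢
    linarith [hP p hp]
  have hst : s ≤ t := hsz.trans (apply_mem_Icc_of_mem_smul_stdSimplexSet ht hz a).2
  have hz' : z + Pi.single a s ∈ (t - s) • -stdSimplexSet α := by
    rw [mem_smul_neg_iff, neg_add']
    exact sub_single_mem_smul_stdSimplexSet ht hz hsz hst
  obtain ⟨_, ⟨n, hn, y', hy', rfl⟩, z', hz'', he⟩ :=
    M.mem_slice_add_away_of_mem_polytope_add a hu (sub_nonneg.2 hst) hlo hhi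
      (Set.add_mem_add (Set.add_mem_add hp hy) hz')
      (by simp only [s, Pi.add_apply, Pi.single_eq_same]; ring)
  beta_reduce at he
  have hz''' := add_single_mem_smul_stdSimplexSet (a := a) (sub_nonneg.2 hst) (sub_nonneg.2 hk)
    (Set.smul_set_mono (stdSimplexAway_subset a) (mem_smul_neg_iff.1 hz''))
  refine ⟨_, Set.add_mem_add hn hy', z' - Pi.single a s, ?_, ?_⟩
  · rw [mem_smul_neg_iff, neg_sub', sub_neg_eq_add]
    simpa [s] using hz'''
  · beta_reduce
    rw [← add_sub_assoc, he]
    abel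

end Slices

section Pieces

variable {α : Type*} [Fintype α] [DecidableEq α] (M : PolyMatroid α) (a : α) (kl kh : ℤ)
  (u t : ℝ)

def PolyMatroid.slicePiece (k : ℤ) : Set (α → ℝ) :=
  M.slice a k + u • (if k = kh then stdSimplexSet α else stdSimplexAway α a) +
    t • -(if k = kl then stdSimplexSet α else stdSimplexAway α a)

theorem PolyMatroid.slicePiece_subset (k : ℤ) :
    M.slicePiece a kl kh u t k ⊆ M.polytope + u • stdSimplexSet α + t • -stdSimplexSet α :=
  Set.add_subset_add (Set.add_subset_add (fun _ hx => hx.1)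
    (Set.smul_set_mono (ite_subset_stdSimplexSet a _)))
    (Set.smul_set_mono (Set.neg_subset_neg.2 (ite_subset_stdSimplexSet a _)))

theorem PolyMatroid.slice_add_subset_slicePiece (k : ℤ) :
    M.slice a k + u • stdSimplexAway α a + t • -stdSimplexAway α a ⊆
      M.slicePiece a kl kh u t k :=
  Set.add_subset_add (Set.add_subset_add_left (Set.smul_set_mono (stdSimplexAway_subset_ite a _)))
    (Set.smul_set_mono (Set.neg_subset_neg.2 (stdSimplexAway_subset_ite a _)))

theorem PolyMatroid.slice_add_subset_slicePiece_max :
    M.slice a kh + u • stdSimplexSet α + t • -stdSimplexAway α a ⊆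
      M.slicePiece a kl kh u t kh := by
  rw [PolyMatroid.slicePiece, if_pos rfl]
  exact Set.add_subset_add_left (Set.smul_set_mono (Set.neg_subset_neg.2
    (stdSimplexAway_subset_ite a _)))

theorem PolyMatroid.slice_add_subset_slicePiece_min :
    M.slice a kl + u • stdSimplexAway α a + t • -stdSimplexSet α ⊆
      M.slicePiece a kl kh u t kl := by
  rw [PolyMatroid.slicePiece, if_pos rfl]
  exact Set.add_subset_add_right (Set.add_subset_add_left (Set.smul_set_mono
    (stdSimplexAway_subset_ite a _)))

variable {M a kl kh u t} [Nontrivial α]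

theorem PolyMatroid.apply_le_of_mem_slicePiece (hu : 0 ≤ u) (ht : 0 ≤ t) {k : ℤ} (hk : k ≠ kh)
    {x : α → ℝ} (hx : x ∈ M.slicePiece a kl kh u t k) : x a ≤ k := by
  obtain ⟨_, ⟨p, hp, y, hy, rfl⟩, z, hz, rfl⟩ := hx
  rw [if_neg hk] at hy
  have hya := ((mem_smul_stdSimplexAway_iff a hu).1 hy).2.2
  have hza := (apply_mem_Icc_of_mem_smul_stdSimplexSet ht
    (Set.smul_set_mono (ite_subset_stdSimplexSet a _) (mem_smul_neg_iff.1 hz)) a).1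
  simp only [Pi.add_apply, Pi.neg_apply, hp.2, hya] at hza ⊢
  linarith

theorem PolyMatroid.le_apply_of_mem_slicePiece (hu : 0 ≤ u) (ht : 0 ≤ t) {k : ℤ} (hk : k ≠ kl)
    {x : α → ℝ} (hx : x ∈ M.slicePiece a kl kh u t k) : k ≤ x a := by
  obtain ⟨_, ⟨p, hp, y, hy, rfl⟩, z, hz, rfl⟩ := hx
  rw [if_neg hk, mem_smul_neg_iff] at hz
  have hya := (apply_mem_Icc_of_mem_smul_stdSimplexSet hu
    (Set.smul_set_mono (ite_subset_stdSimplexSet a _) hy) a).1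
  have hza := ((mem_smul_stdSimplexAway_iff a ht).1 hz).2.2
  simp only [Pi.add_apply, Pi.neg_apply, neg_eq_zero, hp.2] at hza ⊢
  linarith

theorem PolyMatroid.le_of_mem_slicePiece (hu : 0 ≤ u) (ht : 0 ≤ t) {j k : ℤ} (hj : j ≤ kh)
    (hk : kl ≤ k) {x : α → ℝ} (hxj : x ∈ M.slicePiece a kl kh u t j)
    (hxk : x ∈ M.slicePiece a kl kh u t k) : j ≤ k := by
  by_contra! h
  have := (M.le_apply_of_mem_slicePiece hu ht (by omega) hxj).trans
    (M.apply_le_of_mem_slicePiece hu ht (by omega) hxk)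
  exact h.not_ge (by exact_mod_cast this)

theorem PolyMatroid.exists_mem_slicePiece (hu : 0 ≤ u) (ht : 0 ≤ t)
    (hkl : IsLeast {r : ℝ | ∃ x ∈ M.polytope, x a = r} kl)
    (hkh : IsGreatest {r : ℝ | ∃ x ∈ M.polytope, x a = r} kh) {x : α → ℝ}
    (hx : x ∈ M.polytope + u • stdSimplexSet α + t • -stdSimplexSet α) {m : ℤ} (hm : x a = m) :
    ∃ k ∈ Icc kl kh, x ∈ M.slicePiece a kl kh u t k := by
  obtain ⟨⟨pl, hpl, hpla⟩, hlP⟩ := hkl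
  obtain ⟨⟨ph, hph, hpha⟩, hhP⟩ := hkh
  have hlo : (M.rk univ : ℝ) - M.rk (univ.erase a) ≤ kl := hpla ▸ M.rk_sub_rk_erase_le_apply hpl a
  have hhi : (kh : ℝ) ≤ M.rk {a} := hpha ▸ M.apply_le_rk_singleton hph a
  have hlh : kl ≤ kh := by exact_mod_cast hhP ⟨pl, hpl, hpla⟩
  rcases le_or_gt kh m with h | h
  · refine ⟨kh, mem_Icc.2 ⟨hlh, le_rfl⟩, M.slice_add_subset_slicePiece_max a kl kh u t ?_⟩
    exact M.mem_slice_add_of_le_apply hu ht (hlo.trans (Int.cast_le.2 hlh)) hhi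
      (fun p hp => hhP ⟨p, hp, rfl⟩) hx (hm ▸ Int.cast_le.2 h)
  rcases le_or_gt m kl with h' | h'
  · refine ⟨kl, mem_Icc.2 ⟨le_rfl, hlh⟩, M.slice_add_subset_slicePiece_min a kl kh u t ?_⟩
    exact M.mem_slice_add_of_apply_le hu ht hlo ((Int.cast_le.2 hlh).trans hhi)
      (fun p hp => hlP ⟨p, hp, rfl⟩) hx (hm ▸ Int.cast_le.2 h')
  · refine ⟨m, mem_Icc.2 ⟨h'.le, h.le⟩, M.slice_add_subset_slicePiece a kl kh u t m ?_⟩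
    exact M.mem_slice_add_away_of_mem_polytope_add a hu ht (hlo.trans (Int.cast_le.2 h'.le))
      ((Int.cast_le.2 h.le).trans hhi) hx hm

end Pieces

theorem stmt_15_general {α : Type*} [Fintype α] [DecidableEq α] (hcard : 2 ≤ Fintype.card α)
    (M : PolyMatroid α) (a : α) (kl kh : ℤ)
    (hkl : IsLeast {r : ℝ | ∃ x ∈ M.polytope, x a = r} (kl : ℝ))
    (hkh : IsGreatest {r : ℝ | ∃ x ∈ M.polytope, x a = r} (kh : ℝ))
    (t u : ℕ) :
    Set.PairwiseDisjoint (↑(Finset.Icc kl kh) : Set ℤ)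
      (fun k => {q : α → ℤ | (fun i => (q i : ℝ)) ∈
        M.slice a k +
          (u : ℝ) • (if k = kh then stdSimplexSet α else stdSimplexAway α a) +
          (t : ℝ) • (-(if k = kl then stdSimplexSet α else stdSimplexAway α a))}) ∧
    (⋃ k ∈ Finset.Icc kl kh,
      {q : α → ℤ | (fun i => (q i : ℝ)) ∈
        M.slice a k +
          (u : ℝ) • (if k = kh then stdSimplexSet α else stdSimplexAway α a) +
          (t : ℝ) • (-(if k = kl then stdSimplexSet α else stdSimplexAway α a))}) =
      {q : α → ℤ | (fun i => (q i : ℝ)) ∈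
        M.polytope + (u : ℝ) • stdSimplexSet α + (t : ℝ) • (-stdSimplexSet α)} := by
  have : Nontrivial α := Fintype.one_lt_card_iff_nontrivial.1 hcard
  have hu : (0 : ℝ) ≤ u := u.cast_nonneg
  have ht : (0 : ℝ) ≤ t := t.cast_nonneg
  refine ⟨fun j hj k hk hjk => Set.disjoint_left.2 fun q hqj hqk => hjk ?_,
    Set.Subset.antisymm (Set.iUnion₂_subset fun k _ q hq => M.slicePiece_subset a kl kh _ _ k hq)
      fun q hq => ?_⟩
  · rw [coe_Icc, Set.mem_Icc] at hj hk
    exact le_antisymm (M.le_of_mem_slicePiece hu ht hj.2 hk.1 hqj hqk)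
      (M.le_of_mem_slicePiece hu ht hk.2 hj.1 hqk hqj)
  · obtain ⟨k, hk, hqk⟩ := M.exists_mem_slicePiece hu ht hkl hkh hq rfl
    exact Set.mem_iUnion₂.2 ⟨k, hk, hqk⟩

/-- The lattice points of `P(M) + uΔ + t∇` are the disjoint union,
over `k̲ ≤ k ≤ k̄`, of the lattice points of `N_k̄ + uΔ + t∇'`, of
`N_k + uΔ' + t∇'` for `k̲ < k < k̄`, and of `N_k̲ + uΔ' + t∇`. -/
theorem stmt_15 {α : Type*} [Fintype α] [DecidableEq α] (hcard : 2 ≤ Fintype.card α)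
    (M : PolyMatroid α) (a : α) (kl kh : ℤ)
    (hkl : IsLeast {r : ℝ | ∃ x ∈ M.polytope, x a = r} (kl : ℝ))
    (hkh : IsGreatest {r : ℝ | ∃ x ∈ M.polytope, x a = r} (kh : ℝ))
    (hlt : kl < kh) (t u : ℕ) :
    Set.PairwiseDisjoint (↑(Finset.Icc kl kh) : Set ℤ)
      (fun k => {q : α → ℤ | (fun i => (q i : ℝ)) ∈
        M.slice a k +
          (u : ℝ) • (if k = kh then stdSimplexSet α else stdSimplexAway α a) +
          (t : ℝ) • (-(if k = kl then stdSimplexSet α else stdSimplexAway α a))}) ∧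
    (⋃ k ∈ Finset.Icc kl kh,
      {q : α → ℤ | (fun i => (q i : ℝ)) ∈
        M.slice a k +
          (u : ℝ) • (if k = kh then stdSimplexSet α else stdSimplexAway α a) +
          (t : ℝ) • (-(if k = kl then stdSimplexSet α else stdSimplexAway α a))}) =
      {q : α → ℤ | (fun i => (q i : ℝ)) ∈
        M.polytope + (u : ℝ) • stdSimplexSet α + (t : ℝ) • (-stdSimplexSet α)} :=
  stmt_15_general hcard M a kl kh hkl hkh t u

end
end

section
/- Let M = (E,r) be a polymatroid on a finite linearly ordered set E, and let t be a nonnegative integer. For each integer base f of M, let A_f = {i ∈ E : i is internally active with respect to f} (A_f is nonempty since the minimum element of E is always internally active). Then every point of (P(M) + t∇) ∩ ℤ^E lies in the set f + conv{−t·e_i : i ∈ A_f} for exactly one integer base f of M; that is, the sets f + t·conv{−e_i : i ∈ A_f}, as f ranges over the integer bases, partition the lattice points of P(M) + t∇. -/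
open scoped Pointwise
open Finset

noncomputable section

variable {α : Type*} [Fintype α] [DecidableEq α]

/-- `i` is internally active with respect to the integer base `x`: no transfer is
possible from `i` to a smaller element, i.e. `x − e_i + e_v ∉ P(M)` for all `v < i`. -/
def InternallyActive {α : Type*} [Fintype α] [DecidableEq α] [LinearOrder α]
    (P : Set (α → ℝ)) (x : α → ℤ) (i : α) : Prop :=
  ∀ v : α, v < i →
    ((fun j => (x j : ℝ)) - Pi.single i (1 : ℝ) + Pi.single v (1 : ℝ)) ∉ P

/-! A lattice point `q` of `P(M) + t∇` is an integer vector with `q(S) ≤ r(S)` for all `S` and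
`q(E) = r(E) - t`, and it lies in `f + conv{-t eᵢ : i ∈ A_f}` exactly when `q ≤ f` and every
coordinate where `f` exceeds `q` is internally active for `f`. For an integer base `f`, the element
`i` is internally active iff every `v < i` is separated from `i` by an `f`-tight set, and tight sets
are closed under `∩` and `∪` by submodularity.

Such an `f` is built by raising `q`, `t` times, at the least element outside the largest tight
set: no tight set contains that element, and the largest tight set separates it from everything
below. Two such bases `f`, `g` agree: at the first coordinate `i` with `g i < f i`, the smallest
`g`-tight set `T ∋ i` contains some `j` with `f j < g j`, so `j > i` is active for `g`, and the
`g`-tight set separating `i` from `j` cuts `T` down, contradicting minimality. -/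

lemma image_single_eq_smul {R ι : Type*} [Semiring R] [DecidableEq ι] (A : Set ι) (c : R) :
    (fun i => Pi.single i c) '' A = c • ((fun i => Pi.single i (1 : R)) '' A) := by
  rw [← Set.image_smul, Set.image_image]
  simp [← Pi.single_smul]

section StdSimplex

variable {𝕜 ι : Type*} [Field 𝕜] [LinearOrder 𝕜] [IsStrictOrderedRing 𝕜] [Fintype ι]
  [DecidableEq ι]

lemma convexHull_image_single_one (A : Set ι) :
    convexHull 𝕜 ((fun i => Pi.single i (1 : 𝕜)) '' A) =
      {w | w ∈ stdSimplex 𝕜 ι ∧ ∀ j ∉ A, w j = 0} := by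
  classical
  refine (convexHull_min ?_ ?_).antisymm ?_
  · rintro _ ⟨i, hi, rfl⟩
    exact ⟨single_mem_stdSimplex 𝕜 i,
      fun j hj => Pi.single_eq_of_ne (ne_of_mem_of_not_mem hi hj).symm 1⟩
  · refine (convex_stdSimplex 𝕜 ι).inter fun x hx y hy a b _ _ _ j hj => ?_
    simp [hx j hj, hy j hj]
  · rintro w ⟨⟨hw0, hw1⟩, hwA⟩
    have hsum : ∑ i ∈ univ.filter (· ∈ A), w i = 1 := by
      rw [← hw1, sum_filter_of_ne fun j _ hj => by_contra fun hjA => hj (hwA j hjA)]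
    have hw : ∑ i ∈ univ.filter (· ∈ A), w i • Pi.single i (1 : 𝕜) = w := by
      ext j
      simp only [Finset.sum_apply, Pi.smul_apply, Pi.single_apply, smul_eq_mul, mul_ite,
        mul_one, mul_zero, sum_ite_eq, mem_filter, mem_univ, true_and, ite_eq_left_iff]
      exact fun hj => (hwA j hj).symm
    rw [← hw]
    exact (convex_convexHull 𝕜 _).sum_mem (fun i _ => hw0 i) hsum fun i hi =>
      subset_convexHull 𝕜 _ ⟨i, (mem_filter.1 hi).2, rfl⟩

lemma mem_singleton_add_convexHull_image_single_iff {A : Set ι} (hA : A.Nonempty)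
    {x y : ι → 𝕜} {t : 𝕜} (ht0 : 0 ≤ t) (ht : ∑ i, (x i - y i) = t) :
    y ∈ ({x} : Set (ι → 𝕜)) + convexHull 𝕜 ((fun i => Pi.single i (-t)) '' A) ↔
      y ≤ x ∧ ∀ i, y i < x i → i ∈ A := by
  rw [Set.singleton_add, image_single_eq_smul, convexHull_smul, convexHull_image_single_one]
  constructor
  · rintro ⟨_, ⟨w, ⟨hw, hwA⟩, rfl⟩, rfl⟩
    have hle : ∀ i, 0 ≤ t * w i := fun i => mul_nonneg ht0 (hw.1 i)
    refine ⟨fun i => by simpa using hle i, fun i hi => ?_⟩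
    by_contra hiA
    simp [hwA i hiA] at hi
  · rintro ⟨hle, hsupp⟩
    have hvanish : ∀ j ∉ A, x j - y j = 0 := fun j hj =>
      sub_eq_zero.2 ((hle j).eq_or_lt.resolve_right fun h => hj (hsupp j h)).symm
    rcases ht0.eq_or_lt with rfl | htpos
    · -- with `t = 0` every vertex is `0`, so any vertex serves
      obtain ⟨a, ha⟩ := hA
      have hxy : x = y := funext fun j => sub_eq_zero.1 <|
        (sum_eq_zero_iff_of_nonneg fun i _ => sub_nonneg.2 (hle i)).1 ht j (mem_univ j)
      refine ⟨_, ⟨Pi.single a 1, ⟨single_mem_stdSimplex 𝕜 a, fun j hj => ?_⟩, rfl⟩, by simp [hxy]⟩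
      exact Pi.single_eq_of_ne (ne_of_mem_of_not_mem ha hj).symm 1
    · refine ⟨_, ⟨t⁻¹ • (x - y), ⟨⟨fun i => ?_, ?_⟩, fun j hj => ?_⟩, rfl⟩, ?_⟩
      · exact smul_nonneg (inv_nonneg.2 ht0) (sub_nonneg.2 (hle i))
      · simp [← mul_sum, ht, htpos.ne']
      · simp [hvanish j hj]
      · simp only [smul_smul, neg_mul, mul_inv_cancel₀ htpos.ne', neg_smul, one_smul]
        abel

end StdSimplex

lemma stdSimplexSet_eq_stdSimplex (ι : Type*) [Fintype ι] [DecidableEq ι] :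
    stdSimplexSet ι = stdSimplex ℝ ι := by
  rw [stdSimplexSet, ← convexHull_rangle_single_eq_stdSimplex]
  simp_rw [Set.range, eq_comm]

namespace PolyMatroid

section Tight

variable {β : Type*} [Fintype β] [DecidableEq β] (M : PolyMatroid β)

def IsRankBounded (x : β → ℤ) : Prop :=
  ∀ S : Finset β, ∑ i ∈ S, x i ≤ M.rk S

def IsTight (x : β → ℤ) (S : Finset β) : Prop :=
  ∑ i ∈ S, x i = M.rk S

def IsIntBase (x : β → ℤ) : Prop :=
  M.IsRankBounded x ∧ M.IsTight x univ

variable {M} {x y : β → ℤ} {S T : Finset β}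

lemma mem_polytope_add_smul_neg_stdSimplexSet {p : β → ℝ} {t : ℝ} (ht : 0 ≤ t)
    (hp : p ∈ M.polytope + t • (-stdSimplexSet β)) :
    Nonempty β ∧ (∀ S : Finset β, ∑ i ∈ S, p i ≤ M.rk S) ∧ ∑ i, p i = M.rk univ - t := by
  obtain ⟨b, hb, _, ⟨w, hw, rfl⟩, rfl⟩ := hp
  rw [Set.mem_neg, stdSimplexSet_eq_stdSimplex] at hw
  obtain ⟨hw0, hw1⟩ := hw
  simp only [Pi.neg_apply, sum_neg_distrib] at hw0 hw1
  refine ⟨univ_nonempty_iff.1 (nonempty_of_sum_ne_zero (f := w) (by linarith)), fun S => ?_, ?_⟩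
  · have : ∑ i ∈ S, w i ≤ 0 := sum_nonpos fun i _ => by linarith [hw0 i]
    simp only [Pi.add_apply, Pi.smul_apply, smul_eq_mul, sum_add_distrib, ← mul_sum]
    nlinarith [hb.2 S]
  · simp only [Pi.add_apply, Pi.smul_apply, smul_eq_mul, sum_add_distrib, ← mul_sum, hb.1,
      show ∑ i, w i = -1 by linarith]
    ring

lemma intCast_mem_polytope_iff : (fun i => (x i : ℝ)) ∈ M.polytope ↔ M.IsIntBase x := by
  simp only [polytope, IsIntBase, IsRankBounded, IsTight, Set.mem_ofPred_eq, and_comm]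
  norm_cast

lemma IsRankBounded.isTight_inter_union (hx : M.IsRankBounded x) (hS : M.IsTight x S)
    (hT : M.IsTight x T) : M.IsTight x (S ∩ T) ∧ M.IsTight x (S ∪ T) := by
  have hsum := sum_union_inter (s₁ := S) (s₂ := T) (f := x)
  have hsub : (M.rk (S ∪ T) : ℤ) + M.rk (S ∩ T) ≤ M.rk S + M.rk T := by
    exact_mod_cast M.rk_submod S T
  have := hx (S ∪ T)
  have := hx (S ∩ T)
  unfold IsTight at *
  constructor <;> omega

lemma IsRankBounded.exists_isTight_forall_subset (hx : M.IsRankBounded x) :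
    ∃ U, M.IsTight x U ∧ ∀ S, M.IsTight x S → S ⊆ U := by
  obtain ⟨U, hU, hmax⟩ := exists_maximal_of_wellFoundedGT (M.IsTight x)
    ⟨∅, by simp [IsTight, M.rk_empty]⟩
  exact ⟨U, hU, fun S hS => union_subset_right
    (hmax (hx.isTight_inter_union hU hS).2 subset_union_left)⟩

lemma IsIntBase.exists_isTight_mem_forall_subset (hx : M.IsIntBase x) (i : β) :
    ∃ T, i ∈ T ∧ M.IsTight x T ∧ ∀ S, i ∈ S → M.IsTight x S → T ⊆ S := by
  obtain ⟨T, ⟨hiT, hT⟩, hmin⟩ := exists_minimal_of_wellFoundedLT (fun T => i ∈ T ∧ M.IsTight x T)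
    ⟨univ, mem_univ i, hx.2⟩
  exact ⟨T, hiT, hT, fun S hiS hS => (hmin ⟨mem_inter.2 ⟨hiS, hiT⟩,
    (hx.1.isTight_inter_union hS hT).1⟩ inter_subset_right).trans inter_subset_left⟩

lemma IsTight.mono (hS : M.IsTight x S) (hxy : x ≤ y) (hy : M.IsRankBounded y) :
    M.IsTight y S :=
  le_antisymm (hy S) (hS.symm.le.trans (sum_le_sum fun i _ => hxy i))

lemma IsIntBase.isIntBase_exchange_iff (hx : M.IsIntBase x) (i v : β) :
    M.IsIntBase (x - Pi.single i 1 + Pi.single v 1) ↔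
      ∀ S, v ∈ S → i ∉ S → ¬ M.IsTight x S := by
  have hsum : ∀ S : Finset β, ∑ j ∈ S, (x - Pi.single i 1 + Pi.single v 1 : β → ℤ) j =
      ∑ j ∈ S, x j - (if i ∈ S then 1 else 0) + (if v ∈ S then 1 else 0) := fun S => by
    simp only [Pi.add_apply, Pi.sub_apply, sum_add_distrib, sum_sub_distrib, sum_pi_single']
  obtain ⟨hsub, huniv⟩ := hx
  simp only [IsIntBase, IsRankBounded, IsTight] at hsub huniv ⊢
  simp only [hsum]
  constructor
  · rintro ⟨h, -⟩ S hvS hiS htight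
    have := h S
    simp only [hvS, hiS, if_true, if_false] at this
    omega
  · refine fun h => ⟨fun S => ?_, by simp [huniv]⟩
    have := hsub S
    split_ifs with hiS hvS hvS
    · omega
    · omega
    · have := h S hvS hiS
      omega
    · omega

end Tight

section Active

variable {β : Type*} [Fintype β] [LinearOrder β] (M : PolyMatroid β)

def IsActive (x : β → ℤ) (i : β) : Prop :=
  ∀ v < i, ∃ S, v ∈ S ∧ i ∉ S ∧ M.IsTight x S

def Covers (f q : β → ℤ) : Prop :=
  M.IsIntBase f ∧ q ≤ f ∧ ∀ i, q i < f i → M.IsActive f i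

variable {M} {q x y f g : β → ℤ} {i : β}

lemma IsActive.mono (h : M.IsActive x i) (hxy : x ≤ y) (hy : M.IsRankBounded y) :
    M.IsActive y i := fun v hv =>
  let ⟨S, hvS, hiS, hS⟩ := h v hv
  ⟨S, hvS, hiS, hS.mono hxy hy⟩

lemma IsIntBase.internallyActive_iff (hf : M.IsIntBase f) :
    InternallyActive M.polytope f i ↔ M.IsActive f i := by
  refine forall₂_congr fun v _ => ?_
  have hcast : (fun j => (f j : ℝ)) - Pi.single i 1 + Pi.single v 1 =
      fun j => ((f - Pi.single i 1 + Pi.single v 1 : β → ℤ) j : ℝ) := by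
    ext j
    simp only [Pi.add_apply, Pi.sub_apply, Pi.single_apply]
    push_cast
    split_ifs <;> simp
  rw [hcast, intCast_mem_polytope_iff, hf.isIntBase_exchange_iff]
  simp only [not_forall, not_not, exists_prop]

lemma IsRankBounded.exists_isRankBounded_add_single_isActive (hx : M.IsRankBounded x)
    (hx' : ¬ M.IsTight x univ) :
    ∃ i, M.IsRankBounded (x + Pi.single i 1) ∧ M.IsActive (x + Pi.single i 1) i := by
  obtain ⟨U, hU, hmax⟩ := hx.exists_isTight_forall_subset
  obtain ⟨i, hiU, hmin⟩ := exists_minimal_of_wellFoundedLT (· ∉ U) <| by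
    by_contra! h
    exact hx' (by rwa [eq_univ_of_forall h] at hU)
  have hsum : ∀ S : Finset β, ∑ j ∈ S, (x + Pi.single i 1 : β → ℤ) j =
      ∑ j ∈ S, x j + if i ∈ S then 1 else 0 := fun S => by
    simp only [Pi.add_apply, sum_add_distrib, sum_pi_single']
  refine ⟨i, fun S => ?_, fun v hv => ⟨U, ?_, hiU, ?_⟩⟩
  · have := hx S
    rw [hsum]
    split_ifs with hiS
    · have : ¬ M.IsTight x S := fun hS => hiU (hmax S hS hiS)
      unfold IsTight at this
      omega
    · simpa using this
  · by_contra hvU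
    exact (hmin hvU hv.le).not_gt hv
  · unfold IsTight at hU ⊢
    rw [hsum, if_neg hiU, add_zero, hU]

lemma IsRankBounded.exists_covers (hq : M.IsRankBounded q) {t : ℕ}
    (hsum : ∑ i, q i = M.rk univ - t) : ∃ f, M.Covers f q := by
  induction t generalizing q with
  | zero => exact ⟨q, ⟨hq, by simpa [IsTight] using hsum⟩, le_rfl, fun i hi => (hi.ne rfl).elim⟩
  | succ t ih =>
    obtain ⟨i, hq', hact⟩ := hq.exists_isRankBounded_add_single_isActive <| by
      unfold IsTight
      push_cast at hsum
      omega
    obtain ⟨f, hf, hqf, hfact⟩ := ih hq' <| by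
      simp only [Pi.add_apply, sum_add_distrib, sum_pi_single', mem_univ, if_true, hsum]
      push_cast
      ring
    have hle : q ≤ q + Pi.single i 1 := le_add_of_nonneg_right (Pi.single_nonneg.2 zero_le_one)
    refine ⟨f, hf, hle.trans hqf, fun j hj => ?_⟩
    rcases (hqf j).lt_or_eq with hlt | heq
    · exact hfact j hlt
    · obtain rfl : j = i := by
        by_contra hji
        simp [Pi.single_eq_of_ne hji] at heq
        omega
      exact hact.mono hqf hf.1

lemma Covers.le_of_forall_lt_eq (hf : M.Covers f q) (hg : M.Covers g q)
    (heq : ∀ v < i, f v = g v) : f i ≤ g i := by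
  by_contra! hlt
  obtain ⟨T, hiT, hT, hTmin⟩ := hg.1.exists_isTight_mem_forall_subset i
  obtain ⟨j, hjT, hj⟩ : ∃ j ∈ T, f j < g j := by
    by_contra! h
    have := sum_lt_sum h ⟨i, hiT, hlt⟩
    have := hf.1.1 T
    unfold IsTight at hT
    omega
  have hij : i < j := by
    rcases lt_trichotomy j i with h | rfl | h
    · exact absurd (heq j h) hj.ne
    · exact absurd hj hlt.not_gt
    · exact h
  obtain ⟨S, hiS, hjS, hS⟩ := hg.2.2 j ((hf.2.1 j).trans_lt hj) i hij
  exact hjS (hTmin S hiS hS hjT)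

lemma Covers.unique (hf : M.Covers f q) (hg : M.Covers g q) : f = g := by
  funext i
  induction i using WellFoundedLT.induction with
  | _ i ih =>
    exact (hf.le_of_forall_lt_eq hg ih).antisymm
      (hg.le_of_forall_lt_eq hf fun v hv => (ih v hv).symm)

lemma intCast_mem_polytope_and_mem_iff_covers [Nonempty β] {t : ℕ}
    (hq : ∑ i, q i = M.rk univ - t) :
    ((fun i => (f i : ℝ)) ∈ M.polytope ∧
      (fun i => (q i : ℝ)) ∈ ({fun i => (f i : ℝ)} : Set (β → ℝ)) +
        convexHull ℝ ((fun i => Pi.single i (-(t : ℝ))) ''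
          {i | InternallyActive M.polytope f i})) ↔ M.Covers f q := by
  obtain ⟨i₀, hi₀⟩ := Finite.exists_min (id : β → β)
  have hA : {i | InternallyActive M.polytope f i}.Nonempty :=
    ⟨i₀, fun v hv => ((hi₀ v).not_gt hv).elim⟩
  rw [intCast_mem_polytope_iff]
  refine and_congr_right fun hf => ?_
  have hdiff : ∑ i, ((f i : ℝ) - q i) = t := by
    have : ∑ i, (f i - q i) = (t : ℤ) := by
      rw [sum_sub_distrib, hf.2, hq]
      ring
    exact_mod_cast this
  rw [mem_singleton_add_convexHull_image_single_iff hA t.cast_nonneg hdiff]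
  simp only [Pi.le_def, Int.cast_le, Int.cast_lt, Set.mem_ofPred_eq, hf.internallyActive_iff]

end Active

end PolyMatroid

/-- Every lattice point of `P(M) + t∇` lies in
`f + conv{−t·e_i : i internally active w.r.t. f}` for exactly one integer base `f`:
these simplices partition the lattice points of `P(M) + t∇`. -/
theorem stmt_17 {α : Type*} [Fintype α] [LinearOrder α]
    (M : PolyMatroid α) (t : ℕ) (q : α → ℤ)
    (hq : (fun i => (q i : ℝ)) ∈ M.polytope + (t : ℝ) • (-stdSimplexSet α)) :
    ∃! f : α → ℤ,
      (fun i => (f i : ℝ)) ∈ M.polytope ∧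
      (fun i => (q i : ℝ)) ∈
        ({fun i => (f i : ℝ)} : Set (α → ℝ)) +
          convexHull ℝ
            ((fun i : α => (fun j : α => if j = i then -(t : ℝ) else 0)) ''
              {i : α | InternallyActive M.polytope f i}) := by
  obtain ⟨hne, hqsub, hqsum⟩ := M.mem_polytope_add_smul_neg_stdSimplexSet t.cast_nonneg hq
  have hsub : M.IsRankBounded q := fun S => by exact_mod_cast hqsub S
  have hsum : ∑ i, q i = M.rk univ - t := by exact_mod_cast hqsum
  have hsingle : (fun i : α => fun j : α => if j = i then -(t : ℝ) else 0) =
      fun i => Pi.single i (-(t : ℝ)) :=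
    funext fun i => funext fun j => (Pi.single_apply i _ j).symm
  simp only [hsingle, PolyMatroid.intCast_mem_polytope_and_mem_iff_covers hsum]
  obtain ⟨f, hf⟩ := hsub.exists_covers hsum
  exact ⟨f, hf, fun g hg => hg.unique hf⟩

end
end
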